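/- arXiv:2206.04107 — 2 statements merged into one kernel-verified Lean document; each statement's English description precedes it below -/
import Mathlib

section
/- Let $P(x) = \tfrac{1}{2}\sigma^2 x^3 + \sigma^2 \theta x^2 + \left(\tfrac{1}{2}\sigma^2 \theta^2 - \lambda - 1\right)x - \theta$, where $\sigma \ne 0$, $\theta > 0$, $\lambda > 0$. Then $P$ has three distinct real roots $c_1 < -\theta < c_2 < 0 < c_3$. -/
/-! Since `P (-θ) = θ λ > 0`, `P 0 = -θ < 0` and the leading coefficient `σ² / 2` is positive,
`P` changes sign on `(-∞, -θ)`, on `(-θ, 0)` and on `(0, ∞)`; the intermediate value theorem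
gives a root in each. -/

open Filter Polynomial

theorem tendsto_cubic_atTop {a : ℝ} (ha : 0 < a) (b c d : ℝ) :
    Tendsto (fun x : ℝ => a * x ^ 3 + b * x ^ 2 + c * x + d) atTop atTop := by
  have h := tendsto_atTop_of_leadingCoeff_nonneg (C a * X ^ 3 + C b * X ^ 2 + C c * X + C d)
    (by rw [degree_cubic ha.ne']; norm_num) (by rw [leadingCoeff_cubic ha.ne']; exact ha.le)
  simpa using h

theorem tendsto_cubic_atBot {a : ℝ} (ha : 0 < a) (b c d : ℝ) :
    Tendsto (fun x : ℝ => a * x ^ 3 + b * x ^ 2 + c * x + d) atBot atBot := by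
  have h := tendsto_neg_atTop_atBot.comp
    ((tendsto_cubic_atTop ha (-b) c (-d)).comp tendsto_neg_atBot_atTop)
  convert h using 2 with x
  simp only [Function.comp_apply]
  ring

theorem exists_three_roots_of_sign_changes {f : ℝ → ℝ} (hf : Continuous f) {a b : ℝ}
    (hab : a < b) (ha : 0 < f a) (hb : f b < 0)
    (hbot : Tendsto f atBot atBot) (htop : Tendsto f atTop atTop) :
    ∃ c₁ c₂ c₃ : ℝ, f c₁ = 0 ∧ f c₂ = 0 ∧ f c₃ = 0 ∧ c₁ < a ∧ a < c₂ ∧ c₂ < b ∧ b < c₃ := by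
  obtain ⟨l, hl, hla⟩ := ((hbot.eventually (eventually_lt_atBot 0)).and
    (eventually_lt_atBot a)).exists
  obtain ⟨r, hr, hrb⟩ := ((htop.eventually (eventually_gt_atTop 0)).and
    (eventually_gt_atTop b)).exists
  obtain ⟨c₁, hc₁, hfc₁⟩ := intermediate_value_Ioo hla.le hf.continuousOn ⟨hl, ha⟩
  obtain ⟨c₂, hc₂, hfc₂⟩ := intermediate_value_Ioo' hab.le hf.continuousOn ⟨hb, ha⟩
  obtain ⟨c₃, hc₃, hfc₃⟩ := intermediate_value_Ioo hrb.le hf.continuousOn ⟨hb, hr⟩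
  exact ⟨c₁, c₂, c₃, hfc₁, hfc₂, hfc₃, hc₁.2, hc₂.1, hc₂.2, hc₃.1⟩

theorem stmt_6 (σ θ lam : ℝ) (hσ : σ ≠ 0) (hθ : 0 < θ) (hlam : 0 < lam) :
    ∃ c₁ c₂ c₃ : ℝ,
      (fun x : ℝ => (1 / 2) * σ ^ 2 * x ^ 3 + σ ^ 2 * θ * x ^ 2
        + ((1 / 2) * σ ^ 2 * θ ^ 2 - lam - 1) * x - θ) c₁ = 0 ∧
      (fun x : ℝ => (1 / 2) * σ ^ 2 * x ^ 3 + σ ^ 2 * θ * x ^ 2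
        + ((1 / 2) * σ ^ 2 * θ ^ 2 - lam - 1) * x - θ) c₂ = 0 ∧
      (fun x : ℝ => (1 / 2) * σ ^ 2 * x ^ 3 + σ ^ 2 * θ * x ^ 2
        + ((1 / 2) * σ ^ 2 * θ ^ 2 - lam - 1) * x - θ) c₃ = 0 ∧
      c₁ < -θ ∧ -θ < c₂ ∧ c₂ < 0 ∧ 0 < c₃ := by
  have hlead : 0 < (1 / 2) * σ ^ 2 := by positivity
  refine exists_three_roots_of_sign_changes (by fun_prop) (neg_lt_zero.2 hθ) ?_ ?_ ?_ ?_
  · linarith [mul_pos hθ hlam]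
  · linarith
  · simpa only [← sub_eq_add_neg] using tendsto_cubic_atBot hlead (σ ^ 2 * θ)
      ((1 / 2) * σ ^ 2 * θ ^ 2 - lam - 1) (-θ)
  · simpa only [← sub_eq_add_neg] using tendsto_cubic_atTop hlead (σ ^ 2 * θ)
      ((1 / 2) * σ ^ 2 * θ ^ 2 - lam - 1) (-θ)
end

section
/- Let $f : \mathbb{R} \to \mathbb{R}$ be continuous and define $Mf(x) = \inf\{f(x+\eta) + g(\eta) : \eta \ne 0\}$ with $g(\xi) = C + c\xi$ for $\xi > 0$, $g(0) = 0$, $g(\xi) = D - d\xi$ for $\xi < 0$, $C, D > 0$, $c, d \ge 0$. Suppose $a < \alpha \le \beta < b$, $f$ is differentiable on $[a,b]$ with: $f'(x) \le -c$ on $[a,\alpha]$, $-c \le f'(x) \le d$ on $[\alpha,\beta]$, $f'(x) \ge d$ on $[\beta, b]$, and $f'(\alpha) = -c$, $f'(\beta) = d$, and $f$ extended linearly with slope $-c$ on $(-\infty,a]$ and slope $d$ on $[b,\infty)$. Then for $\alpha \le x \le \beta$: $Mf(x) = f(x) + \min\{C, D\}$, and in particular $f(x) \le Mf(x)$ on $[\alpha,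 \beta]$. -/
/-!
The slope bounds say that `f + c·id` is nondecreasing on `[α, ∞)` and `f - d·id` is nonincreasing
on `(-∞, β]` (on the linear tails because `-c ≤ d`). Hence for `x ∈ [α, β]`
a jump up by `η` costs `f (x + η) + C + cη ≥ f x + C`, and a jump down costs at least `f x + D`;
by continuity of `f` these bounds are approached by vanishingly small jumps.
-/

open Set

/-- The impulse cost function: fixed plus proportional cost. -/
noncomputable def impulseCost (C c D d : ℝ) (ξ : ℝ) : ℝ :=
  if 0 < ξ then C + c * ξ else if ξ < 0 then D - d * ξ else 0

/-- The intervention operator `Mf(x) = inf { f(x+η) + g(η) : η ≠ 0 }`. -/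
noncomputable def interventionOp (C c D d : ℝ) (f : ℝ → ℝ) (x : ℝ) : ℝ :=
  sInf {v : ℝ | ∃ η : ℝ, η ≠ 0 ∧ v = f (x + η) + impulseCost C c D d η}

open Filter Topology

theorem monotoneOn_add_mul_Ici {f f' : ℝ → ℝ} {p b c m : ℝ} (hpb : p ≤ b)
    (hf : ContinuousOn f (Icc p b)) (hderiv : ∀ y ∈ Ioo p b, HasDerivAt f (f' y) y)
    (hf' : ∀ y ∈ Ioo p b, -c ≤ f' y) (hright : ∀ y ≥ b, f y = f b + m * (y - b)) (hm : -c ≤ m) :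
    MonotoneOn (fun y => f y + c * y) (Ici p) := by
  have hinner : MonotoneOn (fun y => f y + c * y) (Icc p b) := by
    refine monotoneOn_of_hasDerivWithinAt_nonneg (convex_Icc p b)
      (hf.add (continuousOn_const.mul continuousOn_id)) (f' := fun y => f' y + c) ?_ ?_ <;>
      rw [interior_Icc] <;> intro y hy
    · simpa using ((hderiv y hy).fun_add ((hasDerivAt_id' y).const_mul c)).hasDerivWithinAt
    · linarith [hf' y hy]
  have houter : MonotoneOn (fun y => f y + c * y) (Ici b) := by
    intro y hy z hz hyz
    simp only [hright y hy, hright z hz]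
    nlinarith [mul_nonneg (neg_le_iff_add_nonneg.1 hm) (sub_nonneg.2 hyz)]
  rw [← Icc_union_Ici_eq_Ici hpb]
  exact hinner.union_right houter (isGreatest_Icc hpb) isLeast_Ici

theorem antitoneOn_sub_mul_Iic {f f' : ℝ → ℝ} {a q d m : ℝ} (haq : a ≤ q)
    (hf : ContinuousOn f (Icc a q)) (hderiv : ∀ y ∈ Ioo a q, HasDerivAt f (f' y) y)
    (hf' : ∀ y ∈ Ioo a q, f' y ≤ d) (hleft : ∀ y ≤ a, f y = f a + m * (y - a)) (hm : m ≤ d) :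
    AntitoneOn (fun y => f y - d * y) (Iic q) := by
  have hinner : AntitoneOn (fun y => f y - d * y) (Icc a q) := by
    refine antitoneOn_of_hasDerivWithinAt_nonpos (convex_Icc a q)
      (hf.sub (continuousOn_const.mul continuousOn_id)) (f' := fun y => f' y - d) ?_ ?_ <;>
      rw [interior_Icc] <;> intro y hy
    · simpa using ((hderiv y hy).fun_sub ((hasDerivAt_id' y).const_mul d)).hasDerivWithinAt
    · linarith [hf' y hy]
  have houter : AntitoneOn (fun y => f y - d * y) (Iic a) := by
    intro y hy z hz hyz
    simp only [hleft y hy, hleft z hz]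
    nlinarith [mul_nonneg (sub_nonneg.2 hm) (sub_nonneg.2 hyz)]
  rw [← Iic_union_Icc_eq_Iic haq]
  exact houter.union_right hinner isGreatest_Iic (isLeast_Icc haq)

section interventionOp

variable {C c D d : ℝ} {f : ℝ → ℝ} {x : ℝ}

theorem impulseCost_of_pos {ξ : ℝ} (hξ : 0 < ξ) : impulseCost C c D d ξ = C + c * ξ := by
  simp [impulseCost, hξ]

theorem impulseCost_of_neg {ξ : ℝ} (hξ : ξ < 0) : impulseCost C c D d ξ = D - d * ξ := by
  simp [impulseCost, hξ, hξ.not_gt]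

theorem tendsto_impulseCost_nhdsGT : Tendsto (impulseCost C c D d) (𝓝[>] 0) (𝓝 C) := by
  have h : Tendsto (fun ξ => C + c * ξ) (𝓝[>] 0) (𝓝 C) := tendsto_nhdsWithin_of_tendsto_nhds
    ((show Continuous fun ξ : ℝ => C + c * ξ by fun_prop).tendsto' 0 C (by simp))
  exact h.congr' (eventually_mem_nhdsWithin.mono fun ξ hξ => (impulseCost_of_pos hξ).symm)

theorem tendsto_impulseCost_nhdsLT : Tendsto (impulseCost C c D d) (𝓝[<] 0) (𝓝 D) := by
  have h : Tendsto (fun ξ => D - d * ξ) (𝓝[<] 0) (𝓝 D) := tendsto_nhdsWithin_of_tendsto_nhds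
    ((show Continuous fun ξ : ℝ => D - d * ξ by fun_prop).tendsto' 0 D (by simp))
  exact h.congr' (eventually_mem_nhdsWithin.mono fun ξ hξ => (impulseCost_of_neg hξ).symm)

theorem le_interventionOp {v : ℝ} (h : ∀ η ≠ 0, v ≤ f (x + η) + impulseCost C c D d η) :
    v ≤ interventionOp C c D d f x :=
  le_csInf ⟨_, 1, one_ne_zero, rfl⟩ (by rintro _ ⟨η, hη, rfl⟩; exact h η hη)

theorem interventionOp_le_of_tendsto {l : Filter ℝ} [l.NeBot] {v w : ℝ}
    (hlow : ∀ η ≠ 0, w ≤ f (x + η) + impulseCost C c D d η) (hl : ∀ᶠ η in l, η ≠ 0)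
    (h : Tendsto (fun η => f (x + η) + impulseCost C c D d η) l (𝓝 v)) :
    interventionOp C c D d f x ≤ v :=
  ge_of_tendsto h <| hl.mono fun η hη =>
    csInf_le ⟨w, by rintro _ ⟨η', hη', rfl⟩; exact hlow η' hη'⟩ ⟨η, hη, rfl⟩

theorem add_min_le_add_impulseCost (hup : MonotoneOn (fun y => f y + c * y) (Ici x))
    (hdown : AntitoneOn (fun y => f y - d * y) (Iic x)) {η : ℝ} (hη : η ≠ 0) :
    f x + min C D ≤ f (x + η) + impulseCost C c D d η := by
  rcases hη.lt_or_gt with hneg | hpos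
  · have h := hdown (show x + η ∈ Iic x by simp [hneg.le]) self_mem_Iic (by linarith)
    rw [impulseCost_of_neg hneg]
    linarith [min_le_right C D]
  · have h := hup self_mem_Ici (show x + η ∈ Ici x by simp [hpos.le]) (by linarith)
    rw [impulseCost_of_pos hpos]
    linarith [min_le_left C D]

theorem interventionOp_eq_add_min (hf : ContinuousAt f x)
    (hup : MonotoneOn (fun y => f y + c * y) (Ici x))
    (hdown : AntitoneOn (fun y => f y - d * y) (Iic x)) :
    interventionOp C c D d f x = f x + min C D := by
  have hlow := fun η (hη : η ≠ 0) => add_min_le_add_impulseCost (C := C) (D := D) hup hdown hη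
  have hshift {l : Filter ℝ} (hl : l ≤ 𝓝 0) : Tendsto (fun η => f (x + η)) l (𝓝 (f x)) :=
    hf.tendsto.comp (((continuous_const_add x).tendsto' 0 x (add_zero x)).mono_left hl)
  refine le_antisymm ?_ (le_interventionOp hlow)
  rcases min_choice C D with h | h <;> rw [h]
  · exact interventionOp_le_of_tendsto hlow (eventually_mem_nhdsWithin.mono fun η hη => hη.ne')
      ((hshift nhdsWithin_le_nhds).add tendsto_impulseCost_nhdsGT)
  · exact interventionOp_le_of_tendsto hlow (eventually_mem_nhdsWithin.mono fun η hη => hη.ne)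
      ((hshift nhdsWithin_le_nhds).add tendsto_impulseCost_nhdsLT)

end interventionOp

theorem stmt_19_general (C c D d : ℝ) (hC : 0 < C) (hD : 0 < D)
    (f : ℝ → ℝ) (hf : Continuous f) (f' : ℝ → ℝ)
    (a α β b : ℝ) (haα : a < α) (hαβ : α ≤ β) (hβb : β < b)
    (hderiv : ∀ x ∈ Icc a b, HasDerivWithinAt f (f' x) (Icc a b) x)
    (h₁ : ∀ x ∈ Icc a α, f' x ≤ -c)
    (h₂ : ∀ x ∈ Icc α β, -c ≤ f' x ∧ f' x ≤ d)
    (h₃ : ∀ x ∈ Icc β b, d ≤ f' x)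
    (hleft : ∀ x ≤ a, f x = f a + (-c) * (x - a))
    (hright : ∀ x ≥ b, f x = f b + d * (x - b)) :
    ∀ x ∈ Icc α β, interventionOp C c D d f x = f x + min C D ∧
      f x ≤ interventionOp C c D d f x := by
  intro x hx
  have hcd : -c ≤ d := (h₂ x hx).1.trans (h₂ x hx).2
  have hderivAt : ∀ y ∈ Ioo a b, HasDerivAt f (f' y) y := fun y hy =>
    (hderiv y (Ioo_subset_Icc_self hy)).hasDerivAt (Icc_mem_nhds hy.1 hy.2)
  have hup : MonotoneOn (fun y => f y + c * y) (Ici α) := by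
    refine monotoneOn_add_mul_Ici (hαβ.trans hβb.le) hf.continuousOn
      (fun y hy => hderivAt y ⟨haα.trans hy.1, hy.2⟩) (fun y hy => ?_) hright hcd
    rcases le_total y β with h | h
    · exact (h₂ y ⟨hy.1.le, h⟩).1
    · exact hcd.trans (h₃ y ⟨h, hy.2.le⟩)
  have hdown : AntitoneOn (fun y => f y - d * y) (Iic β) := by
    refine antitoneOn_sub_mul_Iic (haα.le.trans hαβ) hf.continuousOn
      (fun y hy => hderivAt y ⟨hy.1, hy.2.trans hβb⟩) (fun y hy => ?_) hleft hcd
    rcases le_total α y with h | h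
    · exact (h₂ y ⟨h, hy.2.le⟩).2
    · exact (h₁ y ⟨hy.1.le, h⟩).trans hcd
  have heq := interventionOp_eq_add_min (C := C) (D := D) hf.continuousAt
    (hup.mono (Ici_subset_Ici.2 hx.1)) (hdown.mono (Iic_subset_Iic.2 hx.2))
  exact ⟨heq, heq ▸ le_add_of_nonneg_right (le_min hC.le hD.le)⟩

theorem stmt_19 (C c D d : ℝ) (hC : 0 < C) (hD : 0 < D) (hc : 0 ≤ c) (hd : 0 ≤ d)
    (f : ℝ → ℝ) (hf : Continuous f) (f' : ℝ → ℝ)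
    (a α β b : ℝ) (haα : a < α) (hαβ : α ≤ β) (hβb : β < b)
    (hderiv : ∀ x ∈ Icc a b, HasDerivWithinAt f (f' x) (Icc a b) x)
    (h₁ : ∀ x ∈ Icc a α, f' x ≤ -c)
    (h₂ : ∀ x ∈ Icc α β, -c ≤ f' x ∧ f' x ≤ d)
    (h₃ : ∀ x ∈ Icc β b, d ≤ f' x)
    (hα : f' α = -c) (hβ : f' β = d)
    (hleft : ∀ x ≤ a, f x = f a + (-c) * (x - a))
    (hright : ∀ x ≥ b, f x = f b + d * (x - b)) :
    ∀ x ∈ Icc α β, interventionOp C c D d f x = f x + min C D ∧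
      f x ≤ interventionOp C c D d f x :=
  stmt_19_general C c D d hC hD f hf f' a α β b haα hαβ hβb hderiv h₁ h₂ h₃ hleft hright
end
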